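/- Let n ≥ 2, let F be a nonzero antisymmetric real n×n matrix (a Maxwell-like covariant tensor), and let ℓ ∈ ℝⁿ be a null vector. Then Fℓ is a scalar multiple of ηℓ if and only if (FηF)ℓ is a scalar multiple of ηℓ. That is, ℓ spans an aligned null direction of F if and only if ℓ spans a null eigendirection (an aligned null direction of boost order ≤ 0) of the symmetric tensor F² = FηF. -/
import Mathlib


open Matrix

noncomputable section

/-- The Minkowski metric `η = diag(-1, 1, …, 1)` on `ℝⁿ`. -/
def eta (n : ℕ) : Matrix (Fin n) (Fin n) ℝ :=
  Matrix.diagonal fun i => if i.val = 0 then (-1 : ℝ) else 1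

/-- A null vector: nonzero with `vᵀηv = 0`. -/
def IsNull {n : ℕ} (v : Fin n → ℝ) : Prop :=
  v ≠ 0 ∧ v ⬝ᵥ (eta n).mulVec v = 0

lemma eta_mul_eta (n : ℕ) : eta n * eta n = 1 := by
  have h : (fun i : Fin n => (if (i : ℕ) = 0 then (-1 : ℝ) else 1)
      * (if (i : ℕ) = 0 then (-1 : ℝ) else 1)) = fun _ => (1 : ℝ) := by
    funext i; split_ifs <;> norm_num
  rw [eta, diagonal_mul_diagonal, h, diagonal_one]

lemma eta_symm (n : ℕ) : (eta n)ᵀ = eta n := by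
  simp [eta, diagonal_transpose]

lemma eta_dot₂ {n : ℕ} (hn : 0 < n) (x y : Fin n → ℝ) :
    x ⬝ᵥ (eta n).mulVec y = x ⬝ᵥ y - 2 * x ⟨0, hn⟩ * y ⟨0, hn⟩ := by
  simp only [eta, dotProduct, mulVec_diagonal]
  have h : ∀ i ∈ Finset.univ, x i * ((if (i : ℕ) = 0 then (-1 : ℝ) else 1) * y i)
      = x i * y i - (if i = (⟨0, hn⟩ : Fin n) then 2 * x ⟨0, hn⟩ * y ⟨0, hn⟩ else 0) := by
    intro i _
    rcases eq_or_ne i (⟨0, hn⟩ : Fin n) with h | h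
    · subst h; simp; ring
    · have : (i : ℕ) ≠ 0 := by
        simpa [Fin.ext_iff] using h
      simp [this, h]
  rw [Finset.sum_congr rfl h, Finset.sum_sub_distrib]
  simp [Finset.sum_ite_eq']

/-- Two Minkowski-orthogonal null vectors in Lorentzian signature are proportional. -/
lemma null_orth {n : ℕ} (hn : 0 < n) (x y : Fin n → ℝ)
    (hx : x ⬝ᵥ (eta n).mulVec x = 0) (hy : y ⬝ᵥ (eta n).mulVec y = 0)
    (hxy : x ⬝ᵥ (eta n).mulVec y = 0) (hx0 : x ≠ 0) :
    ∃ k : ℝ, y = k • x := by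
  set i0 : Fin n := ⟨0, hn⟩
  have hxx : x ⬝ᵥ x = 2 * x i0 * x i0 := by
    have := eta_dot₂ hn x x; linarith
  have hyy : y ⬝ᵥ y = 2 * y i0 * y i0 := by
    have := eta_dot₂ hn y y; linarith
  have hxy' : x ⬝ᵥ y = 2 * x i0 * y i0 := by
    have := eta_dot₂ hn x y; linarith
  have hx0' : x i0 ≠ 0 := by
    intro h
    apply hx0
    have : x ⬝ᵥ x = 0 := by rw [hxx, h]; ring
    exact (dotProduct_self_eq_zero).1 this
  have hz : (x i0 • y - y i0 • x) ⬝ᵥ (x i0 • y - y i0 • x) = 0 := by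
    have hyx : y ⬝ᵥ x = 2 * x i0 * y i0 := by rw [dotProduct_comm]; exact hxy'
    simp only [sub_dotProduct, dotProduct_sub, smul_dotProduct, dotProduct_smul,
      smul_eq_mul, hxx, hyy, hxy', hyx]
    ring
  have hz0 : x i0 • y - y i0 • x = 0 := (dotProduct_self_eq_zero).1 hz
  refine ⟨y i0 / x i0, ?_⟩
  have heq : x i0 • y = y i0 • x := sub_eq_zero.1 hz0
  funext j
  have hj := congrFun heq j
  simp only [Pi.smul_apply, smul_eq_mul] at hj ⊢
  field_simp
  linarith [hj]

lemma antisym_self_dot {n : ℕ} (F : Matrix (Fin n) (Fin n) ℝ) (hF : Fᵀ = -F)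
    (l : Fin n → ℝ) : l ⬝ᵥ F.mulVec l = 0 := by
  have h2 : l ᵥ* F = -(F *ᵥ l) := by rw [← mulVec_transpose, hF, neg_mulVec]
  have key : l ⬝ᵥ F *ᵥ l = -(l ⬝ᵥ F *ᵥ l) := by
    calc l ⬝ᵥ F *ᵥ l = l ᵥ* F ⬝ᵥ l := dotProduct_mulVec l F l
      _ = -(F *ᵥ l) ⬝ᵥ l := by rw [h2]
      _ = -(l ⬝ᵥ F *ᵥ l) := by rw [neg_dotProduct, dotProduct_comm]
  linarith

/-- A null vector `ℓ` spans an aligned null direction of a nonzero antisymmetric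
(Maxwell-like) tensor `F` iff it spans a null eigendirection (an AND of boost order
`≤ 0`) of the symmetric square `F² = FηF`. -/
theorem stmt16 {n : ℕ} (hn : 2 ≤ n)
    (F : Matrix (Fin n) (Fin n) ℝ) (hF : Fᵀ = -F) (hF0 : F ≠ 0)
    (l : Fin n → ℝ) (hl : IsNull l) :
    (∃ c : ℝ, F.mulVec l = c • ((eta n).mulVec l)) ↔
      (∃ c : ℝ, (F * eta n * F).mulVec l = c • ((eta n).mulVec l)) := by
  have hn0 : 0 < n := by omega
  obtain ⟨hl0, hlnull⟩ := hl
  constructor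
  · rintro ⟨c, hc⟩
    refine ⟨c * c, ?_⟩
    calc (F * eta n * F) *ᵥ l = F *ᵥ (eta n *ᵥ (F *ᵥ l)) := by
          rw [← mulVec_mulVec, ← mulVec_mulVec]
      _ = F *ᵥ (c • ((eta n * eta n) *ᵥ l)) := by rw [hc, mulVec_smul, mulVec_mulVec]
      _ = c • (F *ᵥ l) := by rw [eta_mul_eta, one_mulVec, mulVec_smul]
      _ = (c * c) • (eta n *ᵥ l) := by rw [hc, smul_smul]
  · rintro ⟨c, hc⟩
    set u := F.mulVec l with hu
    set y := (eta n).mulVec u with hy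
    have hetay : (eta n).mulVec y = u := by
      rw [hy, mulVec_mulVec, eta_mul_eta, one_mulVec]
    have horth : l ⬝ᵥ (eta n).mulVec y = 0 := by
      rw [hetay, hu]; exact antisym_self_dot F hF l
    have hynull : y ⬝ᵥ (eta n).mulVec y = 0 := by
      rw [hetay]
      have key : y ⬝ᵥ u = -(c * (l ⬝ᵥ (eta n *ᵥ l))) := by
        calc y ⬝ᵥ u = ((eta n * F) *ᵥ l) ⬝ᵥ (F *ᵥ l) := by rw [hy, hu, mulVec_mulVec]
          _ = (F *ᵥ l) ᵥ* (eta n * F) ⬝ᵥ l := by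
              rw [dotProduct_comm, dotProduct_mulVec]
          _ = (((eta n * F)ᵀ * F) *ᵥ l) ⬝ᵥ l := by
              rw [← mulVec_transpose, mulVec_mulVec]
          _ = ((-(F * eta n * F)) *ᵥ l) ⬝ᵥ l := by
              rw [transpose_mul, eta_symm, hF, Matrix.neg_mul, Matrix.neg_mul]
          _ = -(c * (l ⬝ᵥ (eta n *ᵥ l))) := by
              rw [neg_mulVec, hc, neg_dotProduct, smul_dotProduct, smul_eq_mul,
                dotProduct_comm]
      rw [key, hlnull]
      ring
    obtain ⟨k, hk⟩ := null_orth hn0 l y hlnull hynull horth hl0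
    refine ⟨k, ?_⟩
    show u = k • (eta n *ᵥ l)
    rw [← hetay, hk, mulVec_smul]
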